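/- The kernel K = ker φ is generated, as a subgroup of F, by the set of all two-letter words of the form uv⁻¹ and u⁻¹v where u and v are distinct elements of {a, b, c, d}. -/

import Mathlib

/-- `F₂`, the free group on two generators. -/
abbrev F2 : Type := FreeGroup (Fin 2)

/-- `a`, a free generator of the first factor of `F₂ × F₂`. -/
def a : F2 × F2 := (FreeGroup.of 0, 1)
/-- `b`, a free generator of the first factor of `F₂ × F₂`. -/
def b : F2 × F2 := (FreeGroup.of 1, 1)
/-- `c`, a free generator of the second factor of `F₂ × F₂`. -/
def c : F2 × F2 := (1, FreeGroup.of 0)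
/-- `d`, a free generator of the second factor of `F₂ × F₂`. -/
def d : F2 × F2 := (1, FreeGroup.of 1)

/-!
Write `H` for the subgroup generated by the two-letter words; it lies in `K` because `φ` takes the
same value on all four letters. Conversely, since the two factors commute, `a c⁻¹` and `b c⁻¹` show
that every `(x, 1)` lies in `H` up to a power of `c`, and likewise `a⁻¹ c`, `a⁻¹ d` show that every
`(1, y)` lies in `H` up to a power of `a`. Hence every `g ∈ K` is a product of two elements of `H`
and some `aᵐ cᵏ ∈ K`; then `m + k = 0`, so `aᵐ cᵏ = (a c⁻¹)ᵐ ∈ H`.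
-/

open Subgroup Multiplicative

section TwoLetterWords

variable {G : Type*} [Group G]

def twoLetterWords (X : Set G) : Set G :=
  {x | ∃ u ∈ X, ∃ v ∈ X, u ≠ v ∧ (x = u * v⁻¹ ∨ x = u⁻¹ * v)}

variable {X : Set G} {u v : G}

lemma mul_inv_mem_closure_twoLetterWords (hu : u ∈ X) (hv : v ∈ X) (huv : u ≠ v) :
    u * v⁻¹ ∈ closure (twoLetterWords X) :=
  subset_closure ⟨u, hu, v, hv, huv, .inl rfl⟩

lemma inv_mul_mem_closure_twoLetterWords (hu : u ∈ X) (hv : v ∈ X) (huv : u ≠ v) :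
    u⁻¹ * v ∈ closure (twoLetterWords X) :=
  subset_closure ⟨u, hu, v, hv, huv, .inr rfl⟩

lemma closure_twoLetterWords_le_ker {M : Type*} [Group M] {φ : G →* M} {m : M}
    (hX : ∀ u ∈ X, φ u = m) : closure (twoLetterWords X) ≤ φ.ker := by
  rw [closure_le]
  rintro x ⟨u, hu, v, hv, -, rfl | rfl⟩ <;> simp [hX u hu, hX v hv]

end TwoLetterWords

section Prod

variable {G₁ G₂ : Type*} [Group G₁] [Group G₂]

lemma exists_mk_zpow_mem_of_closure_eq_top {X : Set G₁} (hX : closure X = ⊤)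
    {H : Subgroup (G₁ × G₂)} {t : G₂} (hH : ∀ s ∈ X, ∃ k : ℤ, (s, t ^ k) ∈ H) (x : G₁) :
    ∃ k : ℤ, (x, t ^ k) ∈ H := by
  have hx : x ∈ closure X := hX ▸ mem_top x
  induction hx using closure_induction with
  | mem s hs => exact hH s hs
  | one => exact ⟨0, by rw [zpow_zero]; exact H.one_mem⟩
  | mul x y _ _ hx hy =>
    obtain ⟨k, hk⟩ := hx
    obtain ⟨l, hl⟩ := hy
    exact ⟨k + l, by simpa [zpow_add] using H.mul_mem hk hl⟩
  | inv x _ hx =>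
    obtain ⟨k, hk⟩ := hx
    exact ⟨-k, by simpa [zpow_neg] using H.inv_mem hk⟩

lemma exists_zpow_mk_mem_of_closure_eq_top {X : Set G₂} (hX : closure X = ⊤)
    {H : Subgroup (G₁ × G₂)} {t : G₁} (hH : ∀ s ∈ X, ∃ k : ℤ, (t ^ k, s) ∈ H) (y : G₂) :
    ∃ k : ℤ, (t ^ k, y) ∈ H :=
  exists_mk_zpow_mem_of_closure_eq_top (H := H.comap (MulEquiv.prodComm : G₂ × G₁ ≃* G₁ × G₂).toMonoidHom) hX hH y

end Prod

lemma zpow_mul_zpow_mem_zpowers_of_mem_ker {G : Type*} [Group G] {φ : G →* Multiplicative ℤ}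
    {u v : G} (huv : Commute u v) (hu : φ u = ofAdd 1) (hv : φ v = ofAdd 1) {m k : ℤ}
    (h : u ^ m * v ^ k ∈ φ.ker) : u ^ m * v ^ k ∈ zpowers (u * v⁻¹) := by
  have hmk : m + k = 0 := by
    simpa [hu, hv, ← ofAdd_zsmul, ← ofAdd_add] using h
  obtain rfl : k = -m := by omega
  exact ⟨m, by simp [huv.inv_right.mul_zpow, zpow_neg]⟩

lemma commute_a_c : Commute a c := by
  simp [Commute, SemiconjBy, a, c]

lemma a_ne_c : a ≠ c := by simp [a, c]
lemma a_ne_d : a ≠ d := by simp [a, d]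
lemma b_ne_c : b ≠ c := by simp [b, c]

/-- `K = ker φ` is generated by the set of all two-letter words `uv⁻¹` and `u⁻¹v` where `u, v`
are distinct elements of `{a, b, c, d}`. -/
theorem stmt_2 (φ : F2 × F2 →* Multiplicative ℤ)
    (ha : φ a = Multiplicative.ofAdd 1) (hb : φ b = Multiplicative.ofAdd 1)
    (hc : φ c = Multiplicative.ofAdd 1) (hd : φ d = Multiplicative.ofAdd 1) :
    Subgroup.closure
      {x : F2 × F2 | ∃ u ∈ ({a, b, c, d} : Set (F2 × F2)), ∃ v ∈ ({a, b, c, d} : Set (F2 × F2)),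
        u ≠ v ∧ (x = u * v⁻¹ ∨ x = u⁻¹ * v)} = φ.ker := by
  change closure (twoLetterWords {a, b, c, d}) = φ.ker
  set H := closure (twoLetterWords ({a, b, c, d} : Set (F2 × F2)))
  have hHK : H ≤ φ.ker := closure_twoLetterWords_le_ker (m := ofAdd 1) (by
    rintro u (rfl | rfl | rfl | rfl) <;> assumption)
  refine le_antisymm hHK fun g hg => ?_
  obtain ⟨k, hk⟩ : ∃ k : ℤ, (g.1, c.2 ^ k) ∈ H := by
    refine exists_mk_zpow_mem_of_closure_eq_top (FreeGroup.closure_range_of _) ?_ g.1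
    rintro _ ⟨i, rfl⟩
    refine ⟨-1, ?_⟩
    fin_cases i
    · simpa [a, c] using mul_inv_mem_closure_twoLetterWords (by simp) (by simp) a_ne_c
    · simpa [b, c] using mul_inv_mem_closure_twoLetterWords (by simp) (by simp) b_ne_c
  obtain ⟨m, hm⟩ : ∃ m : ℤ, (a.1 ^ m, g.2) ∈ H := by
    refine exists_zpow_mk_mem_of_closure_eq_top (FreeGroup.closure_range_of _) ?_ g.2
    rintro _ ⟨i, rfl⟩
    refine ⟨-1, ?_⟩
    fin_cases i
    · simpa [a, c] using inv_mul_mem_closure_twoLetterWords (by simp) (by simp) a_ne_c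
    · simpa [a, d] using inv_mul_mem_closure_twoLetterWords (by simp) (by simp) a_ne_d
  have hdecomp : g = (g.1, c.2 ^ k) * (a ^ m * c ^ k)⁻¹ * (a.1 ^ m, g.2) := by
    ext <;> simp [a, c]
  have hac : a ^ m * c ^ k ∈ H := by
    refine zpowers_le.mpr (mul_inv_mem_closure_twoLetterWords (by simp) (by simp) a_ne_c) <|
      zpow_mul_zpow_mem_zpowers_of_mem_ker commute_a_c ha hc ?_
    have : a ^ m * c ^ k = (a.1 ^ m, g.2) * g⁻¹ * (g.1, c.2 ^ k) := by
      nth_rw 2 [hdecomp]; group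
    rw [this]
    exact mul_mem (mul_mem (hHK hm) (inv_mem hg)) (hHK hk)
  rw [hdecomp]
  exact mul_mem (mul_mem hk (inv_mem hac)) hm
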